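/- Two words u and v of length m over alphabet S lie in the same commutation class if and only if their associated word posets (constructed as the heap order on positions) are isomorphic as labeled posets. Consequently, isomorphism classes of word posets with m elements are in bijection with commutation classes of words of length m. -/

import Mathlib

def SwapStep {S : Type*} (R : S → S → Prop) (u v : List S) : Prop :=
  ∃ (x y : List S) (a b : S), R a b ∧ u = x ++ a :: b :: y ∧ v = x ++ b :: a :: y

def CommEquiv {S : Type*} (R : S → S → Prop) : List S → List S → Prop :=
  Relation.ReflTransGen (SwapStep R)

def HeapLE {S : Type*} (R : S → S → Prop) {m : ℕ} (w : Fin m → S) :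
    Fin m → Fin m → Prop :=
  Relation.ReflTransGen (fun i j => i ≤ j ∧ (w i = w j ∨ ¬ R (w i) (w j)))

/-!
A commutation `x a b y ↦ x b a y` with `R a b` transposes two adjacent positions carrying
commuting letters; such a transposition is an isomorphism of heaps (or the word is unchanged,
if `a = b`), which gives one direction.

Conversely, let `f` be a labeled isomorphism from the heap of `u` to that of `v`. The position
`f 0` is minimal in the heap of `v`, so every earlier letter of `v` commutes with
`v (f 0) = u 0`, and that letter can be commuted to the front. Removing a minimal element does
not change the order among the remaining positions, so `f` restricts to an isomorphism between
the heaps of the two shorter words, and induction on the length concludes.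
-/

open Function Relation

theorem Relation.reflTransGen_iff_of_injective {α β : Type*} {r : α → α → Prop}
    {s : β → β → Prop} {e : α → β} (he : Injective e) (hrs : ∀ a b, r a b ↔ s (e a) (e b))
    (hclosed : ∀ a y, s (e a) y → y ∈ Set.range e) {a b : α} :
    ReflTransGen r a b ↔ ReflTransGen s (e a) (e b) := by
  refine ⟨fun h => h.lift e fun x y => (hrs x y).1, fun h => ?_⟩
  suffices ∀ y, ReflTransGen s (e a) y → ∃ c, e c = y ∧ ReflTransGen r a c by
    obtain ⟨c, hc, hac⟩ := this _ h
    rwa [he hc] at hac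
  intro y hy
  induction hy with
  | refl => exact ⟨a, rfl, .refl⟩
  | tail _ hyz ih =>
    obtain ⟨c, rfl, hac⟩ := ih
    obtain ⟨d, rfl⟩ := hclosed c _ hyz
    exact ⟨d, rfl, hac.tail ((hrs c d).2 hyz)⟩

theorem CovBy.swap_apply_le_swap_apply_iff {α : Type*} [LinearOrder α] [DecidableEq α]
    {a b i j : α} (hab : a ⋖ b) (h : ¬(i = a ∧ j = b)) (h' : ¬(i = b ∧ j = a)) :
    Equiv.swap a b i ≤ Equiv.swap a b j ↔ i ≤ j := by
  have hlt := hab.lt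
  have hbetween : ∀ c, a ≤ c → c ≤ b → c = a ∨ c = b := fun c => hab.eq_or_eq
  rw [Equiv.swap_apply_def, Equiv.swap_apply_def]
  split_ifs <;> subst_vars <;> grind

theorem Equiv.exists_succAbove_apply_eq {n : ℕ} (f : Fin (n + 1) ≃ Fin (n + 1))
    (a : Fin (n + 1)) :
    ∃ g : Fin n ≃ Fin n, ∀ i, (f a).succAbove (g i) = f (a.succAbove i) := by
  let f' : { x // x ≠ a } ≃ { y // y ≠ f a } := f.subtypeEquiv fun _ => f.injective.ne_iff.symm
  exact ⟨(finSuccAboveEquiv a).trans (f'.trans (finSuccAboveEquiv (f a)).symm), fun i =>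
    congrArg Subtype.val ((finSuccAboveEquiv (f a)).apply_symm_apply (f' (finSuccAboveEquiv a i)))⟩

theorem List.ofFn_removeNth {n : ℕ} {α : Type*} (v : Fin (n + 1) → α) (p : Fin (n + 1)) :
    List.ofFn (Fin.removeNth p v) = (List.ofFn v).eraseIdx p := by
  apply List.ext_getElem (by simp [List.length_eraseIdx, Fin.is_le])
  intro i _ _
  simp only [List.getElem_ofFn, List.getElem_eraseIdx, Fin.removeNth, Fin.succAbove, Fin.lt_def]
  split_ifs <;> simp_all

section Heap
variable {S : Type*} {R : S → S → Prop} {m : ℕ}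

theorem HeapLE.le {w : Fin m → S} {i j : Fin m} (h : HeapLE R w i j) : i ≤ j := by
  induction h with
  | refl => rfl
  | tail _ hstep ih => exact ih.trans hstep.1

theorem heapLE_comp_swap_iff {w : Fin m → S} {a b : Fin m} (hab : a ⋖ b)
    (hR : R (w a) (w b)) (hR' : R (w b) (w a)) (hne : w a ≠ w b) {i j : Fin m} :
    HeapLE R w i j ↔ HeapLE R (w ∘ Equiv.swap a b) (Equiv.swap a b i) (Equiv.swap a b j) := by
  refine reflTransGen_iff_of_injective (Equiv.injective _) (fun x y => ?_)
    (fun _ y _ => (Equiv.surjective _) y)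
  have hlabel : ∀ z, (w ∘ Equiv.swap a b) (Equiv.swap a b z) = w z := fun _ => by simp
  simp only [hlabel]
  by_cases hxy : x = a ∧ y = b
  · obtain ⟨rfl, rfl⟩ := hxy
    simp [hR, hne]
  by_cases hyx : x = b ∧ y = a
  · obtain ⟨rfl, rfl⟩ := hyx
    simp [hR', hne.symm]
  rw [CovBy.swap_apply_le_swap_apply_iff hab hxy hyx]

theorem heapLE_removeNth_iff {n : ℕ} {v : Fin (n + 1) → S} {p : Fin (n + 1)}
    (hp : ∀ q, HeapLE R v q p → q = p) {i j : Fin n} :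
    HeapLE R (Fin.removeNth p v) i j ↔ HeapLE R v (p.succAbove i) (p.succAbove j) := by
  refine reflTransGen_iff_of_injective Fin.succAbove_right_injective
    (fun _ _ => by simp [Fin.removeNth, Fin.succAbove_le_succAbove_iff]) (fun x y hxy => ?_)
  rw [Fin.range_succAbove]
  exact fun hyp => Fin.succAbove_ne p x (hp _ (.single (hyp ▸ hxy)))

def IsHeapIso (R : S → S → Prop) (u v : Fin m → S) (f : Fin m ≃ Fin m) : Prop :=
  (∀ i j, HeapLE R u i j ↔ HeapLE R v (f i) (f j)) ∧ ∀ i, v (f i) = u i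

theorem IsHeapIso.refl (u : Fin m → S) : IsHeapIso R u u (Equiv.refl _) :=
  ⟨fun _ _ => Iff.rfl, fun _ => rfl⟩

theorem IsHeapIso.trans {u v w : Fin m → S} {f g : Fin m ≃ Fin m} (hf : IsHeapIso R u v f)
    (hg : IsHeapIso R v w g) : IsHeapIso R u w (f.trans g) :=
  ⟨fun i j => (hf.1 i j).trans (hg.1 _ _), fun i => (hg.2 _).trans (hf.2 i)⟩

theorem isHeapIso_comp_swap {w : Fin m → S} {a b : Fin m} (hab : a ⋖ b)
    (hR : R (w a) (w b)) (hR' : R (w b) (w a)) (hne : w a ≠ w b) :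
    IsHeapIso R w (w ∘ Equiv.swap a b) (Equiv.swap a b) :=
  ⟨fun _ _ => heapLE_comp_swap_iff hab hR hR' hne, fun _ => by simp⟩

theorem IsHeapIso.eq_apply_of_heapLE {u v : Fin m → S} {f : Fin m ≃ Fin m}
    (hf : IsHeapIso R u v f) {a : Fin m} (ha : ∀ q, HeapLE R u q a → q = a) {q : Fin m}
    (hq : HeapLE R v q (f a)) : q = f a := by
  rw [← f.apply_symm_apply q] at hq ⊢
  rw [ha _ ((hf.1 _ _).2 hq)]

theorem IsHeapIso.exists_removeNth {n : ℕ} {u v : Fin (n + 1) → S}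
    {f : Fin (n + 1) ≃ Fin (n + 1)} (hf : IsHeapIso R u v f) {a : Fin (n + 1)}
    (ha : ∀ q, HeapLE R u q a → q = a) :
    ∃ g, IsHeapIso R (Fin.removeNth a u) (Fin.removeNth (f a) v) g := by
  obtain ⟨g, hg⟩ := f.exists_succAbove_apply_eq a
  have hp : ∀ q, HeapLE R v q (f a) → q = f a := fun _ => hf.eq_apply_of_heapLE ha
  refine ⟨g, fun i j => ?_, fun i => ?_⟩
  · rw [heapLE_removeNth_iff ha, heapLE_removeNth_iff hp, hg, hg]
    exact hf.1 _ _
  · simp only [Fin.removeNth, hg, hf.2]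

theorem SwapStep.symm [Std.Symm R] {l l' : List S} (h : SwapStep R l l') : SwapStep R l' l :=
  let ⟨x, y, a, b, hab, hl, hl'⟩ := h
  ⟨x, y, b, a, Std.Symm.symm _ _ hab, hl', hl⟩

theorem CommEquiv.symm [Std.Symm R] {l l' : List S} (h : CommEquiv R l l') :
    CommEquiv R l' l :=
  ReflTransGen.mono (fun _ _ => SwapStep.symm) _ _ (ReflTransGen.swap _ _ h)

theorem CommEquiv.cons (c : S) {l l' : List S} (h : CommEquiv R l l') :
    CommEquiv R (c :: l) (c :: l') :=
  h.lift (c :: ·) fun _ _ ⟨x, y, a, b, hab, hl, hl'⟩ =>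
    ⟨c :: x, y, a, b, hab, by simp [hl], by simp [hl']⟩

theorem commEquiv_append_cons {a : S} {t : List S} :
    ∀ {l : List S}, (∀ x ∈ l, R x a) → CommEquiv R (l ++ a :: t) (a :: (l ++ t))
  | [], _ => .refl
  | c :: _, h => ((commEquiv_append_cons fun x hx => h x (.tail _ hx)).cons c).tail
      ⟨[], _, c, a, h c (.head _), rfl, rfl⟩

theorem commEquiv_ofFn_removeNth {n : ℕ} {v : Fin (n + 1) → S} {p : Fin (n + 1)}
    (h : ∀ q < p, R (v q) (v p)) :
    CommEquiv R (List.ofFn v) (v p :: List.ofFn (Fin.removeNth p v)) := by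
  have hsplit := (List.take_append_drop p (List.ofFn v)).symm
  rw [List.drop_eq_getElem_cons (by simp [Fin.is_le]), List.getElem_ofFn, Fin.eta] at hsplit
  rw [List.ofFn_removeNth, List.eraseIdx_eq_take_drop_succ]
  conv_lhs => rw [hsplit]
  refine commEquiv_append_cons fun x hx => ?_
  obtain ⟨i, hi, rfl⟩ := List.mem_take_iff_getElem.1 hx
  rw [List.getElem_ofFn]
  exact h _ (Fin.lt_def.2 (lt_min_iff.1 hi).1)

theorem SwapStep.exists_eq_ofFn_comp_swap {u : Fin m → S} {l : List S}
    (h : SwapStep R (List.ofFn u) l) :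
    ∃ a b : Fin m, a ⋖ b ∧ R (u a) (u b) ∧ l = List.ofFn (u ∘ Equiv.swap a b) := by
  obtain ⟨x, y, a, b, hab, hu, rfl⟩ := h
  have hlen := congrArg List.length hu
  simp only [List.length_ofFn, List.length_append, List.length_cons] at hlen
  have hget : ∀ j : Fin m, u j = (x ++ a :: b :: y)[j.val]'(by simp; omega) := by
    intro j
    simp only [← hu, List.getElem_ofFn]
  refine ⟨⟨x.length, by omega⟩, ⟨x.length + 1, by omega⟩, by simp, by simpa [hget], ?_⟩
  apply List.ext_getElem (by simp; omega)
  intro i _ _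
  simp only [List.getElem_ofFn, Function.comp_apply, Equiv.swap_apply_def, Fin.ext_iff]
  split_ifs <;> simp only [hget, List.getElem_append, List.getElem_cons] <;> split_ifs <;>
    first | omega | rfl

theorem exists_isHeapIso_of_commEquiv [Std.Symm R] {u v : Fin m → S}
    (h : CommEquiv R (List.ofFn u) (List.ofFn v)) : ∃ f, IsHeapIso R u v f := by
  suffices ∀ l, CommEquiv R (List.ofFn u) l → ∃ w f, l = List.ofFn w ∧ IsHeapIso R u w f by
    obtain ⟨w, f, hw, hf⟩ := this _ h
    exact ⟨f, List.ofFn_injective hw ▸ hf⟩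
  intro l hl
  induction hl with
  | refl => exact ⟨u, _, rfl, .refl u⟩
  | tail _ hstep ih =>
    obtain ⟨w, f, rfl, hf⟩ := ih
    obtain ⟨a, b, hab, hR, rfl⟩ := hstep.exists_eq_ofFn_comp_swap
    by_cases hne : w a = w b
    · refine ⟨w, f, ?_, hf⟩
      rw [Equiv.comp_swap_eq_update, hne, update_eq_self, ← hne, update_eq_self]
    · exact ⟨_, _, rfl, hf.trans (isHeapIso_comp_swap hab hR (Std.Symm.symm _ _ hR) hne)⟩

theorem commEquiv_of_isHeapIso [Std.Symm R] :
    ∀ {m : ℕ} {u v : Fin m → S} {f : Fin m ≃ Fin m},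
      IsHeapIso R u v f → CommEquiv R (List.ofFn u) (List.ofFn v)
  | 0, _, _, _, _ => by rw [List.ofFn_zero, List.ofFn_zero]; exact .refl
  | n + 1, u, v, f, hf => by
    have h0 : ∀ q, HeapLE R u q 0 → q = 0 := fun q hq => Fin.le_zero_iff.1 hq.le
    have hmin : ∀ q, HeapLE R v q (f 0) → q = f 0 := fun _ => hf.eq_apply_of_heapLE h0
    have hcomm : ∀ q < f 0, R (v q) (v (f 0)) := fun q hq => by
      by_contra hR
      exact hq.ne (hmin q (.single ⟨hq.le, .inr hR⟩))
    obtain ⟨g, hg⟩ := hf.exists_removeNth h0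
    have hu : List.ofFn u = u 0 :: List.ofFn (Fin.removeNth 0 u) := by
      rw [Fin.removeNth_zero, List.ofFn_succ]
      rfl
    rw [hu, ← hf.2 0]
    exact ((commEquiv_of_isHeapIso hg).cons _).trans (commEquiv_ofFn_removeNth hcomm).symm

end Heap

theorem stmt4_general {S : Type*} (R : S → S → Prop) (hsymm : Symmetric R)
    {m : ℕ} (u v : Fin m → S) :
    CommEquiv R (List.ofFn u) (List.ofFn v) ↔
      ∃ f : Fin m ≃ Fin m,
        (∀ i j : Fin m, HeapLE R u i j ↔ HeapLE R v (f i) (f j)) ∧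
        ∀ i : Fin m, v (f i) = u i := by
  have : Std.Symm R := ⟨fun _ _ h => hsymm h⟩
  exact ⟨exists_isHeapIso_of_commEquiv, fun ⟨_, hf⟩ => commEquiv_of_isHeapIso hf⟩

/-- Two words of length `m` lie in the same commutation class iff their heap posets are
isomorphic as labeled posets; hence isomorphism classes of word posets with `m` elements
are in bijection with commutation classes of words of length `m`. -/
theorem stmt4 {S : Type*} (R : S → S → Prop) (hsymm : Symmetric R) (hirr : Irreflexive R)
    {m : ℕ} (u v : Fin m → S) :
    CommEquiv R (List.ofFn u) (List.ofFn v) ↔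
      ∃ f : Fin m ≃ Fin m,
        (∀ i j : Fin m, HeapLE R u i j ↔ HeapLE R v (f i) (f j)) ∧
        ∀ i : Fin m, v (f i) = u i :=
  stmt4_general R hsymm u v
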